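/- Fix a real number p ≥ 2. For integers n > p define AT(n,p) = π^{-1/2} n^{-1/p} ((p-1)/(n-p))^{1/p'} (Γ(n/2+1) Γ(n) / (Γ(n/p) Γ(n/p' + 1)))^{1/n} and S(n,p) = (p*/n)(1 - 1/n) p^{-1/p} (2π)^{-1/2} (e/n)^{1/p' - 1/2} (Γ(n)/Γ(n/p))^{1/n}, where p' = p/(p-1) and p* = pn/(n-p). Then lim_{n→∞} S(n,p)/AT(n,p) = 1. -/

import Mathlib

open Real Filter

/-- The sharp Aubin–Talenti constant in the Euclidean `L^p`-Sobolev inequality on `ℝ^n`. -/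
noncomputable def AT (n : ℕ) (p : ℝ) : ℝ :=
  Real.pi ^ (-(1 : ℝ) / 2) * (n : ℝ) ^ (-(1 : ℝ) / p) *
    ((p - 1) / ((n : ℝ) - p)) ^ (1 / (p / (p - 1))) *
    (Real.Gamma ((n : ℝ) / 2 + 1) * Real.Gamma (n : ℝ) /
        (Real.Gamma ((n : ℝ) / p) * Real.Gamma ((n : ℝ) / (p / (p - 1)) + 1))) ^ ((1 : ℝ) / n)

/-- The Sobolev constant obtained for minimal submanifolds, `p ≥ 2`. -/
noncomputable def S (n : ℕ) (p : ℝ) : ℝ :=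
  ((p * n / ((n : ℝ) - p)) / n) * (1 - 1 / (n : ℝ)) * p ^ (-(1 : ℝ) / p) *
    (2 * Real.pi) ^ (-(1 : ℝ) / 2) *
    (Real.exp 1 / n) ^ (1 / (p / (p - 1)) - 1 / 2) *
    (Real.Gamma (n : ℝ) / Real.Gamma ((n : ℝ) / p)) ^ ((1 : ℝ) / n)

/-! Taking logarithms, `log (S n p / AT n p)` is exactly
`L (n / p') / n - L (n / 2) / n - (1 / p) log (1 - p / n) + log (1 - 1 / n)`,
where `L x = log Γ(x + 1) - (x log x - x)`: the explicit powers of `π`, `e`, `n` and `p`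
cancel against the Stirling main terms of the two Gamma factors surviving in the quotient.
The weak Stirling bound `L x = O(log x)`, transferred from factorials to real arguments by
monotonicity of `Γ` on `[2, ∞)`, makes every term tend to `0`. -/

open Asymptotics
open scoped Nat

lemma log_factorial_le_stirling {n : ℕ} (hn : n ≠ 0) :
    log n ! ≤ n * log n - n + 1 + log n / 2 := by
  obtain ⟨k, rfl⟩ := Nat.exists_eq_succ_of_ne_zero hn
  -- the Stirling sequence decreases from `stirlingSeq 1 = e / √2`
  have hseq : log (Stirling.stirlingSeq (k + 1)) ≤ 1 - log 2 / 2 := by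
    have h := Stirling.log_stirlingSeq'_antitone (Nat.zero_le k)
    simp only [Function.comp_apply, Nat.succ_eq_add_one, zero_add, Stirling.stirlingSeq_one] at h
    rwa [log_div (exp_ne_zero 1) (by positivity), log_exp, log_sqrt zero_le_two] at h
  have hk : (0 : ℝ) < (k + 1 : ℕ) := by positivity
  rw [Stirling.log_stirlingSeq_formula, log_mul two_ne_zero hk.ne',
    log_div hk.ne' (exp_ne_zero 1), log_exp] at hseq
  linarith

/-- Tangent-line inequality for the convex function `t log t - t`. -/
lemma mul_log_sub_self_sub_le {s t : ℝ} (hs : 0 < s) (ht : 0 < t) :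
    (t * log t - t) - (s * log s - s) ≤ (t - s) * log t := by
  have h : s * (log t - log s) ≤ t - s :=
    calc s * (log t - log s) = s * log (t / s) := by rw [log_div ht.ne' hs.ne']
      _ ≤ s * (t / s - 1) := by gcongr; exact log_le_sub_one_of_pos (div_pos ht hs)
      _ = t - s := by field_simp
  linear_combination h

lemma abs_log_Gamma_add_one_sub_le {x : ℝ} (hx : 1 ≤ x) :
    |log (Gamma (x + 1)) - (x * log x - x)| ≤ 3 + 2 * log x := by
  set m := ⌊x⌋₊
  have hm1 : 1 ≤ m := Nat.le_floor (by exact_mod_cast hx)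
  have hm : (1 : ℝ) ≤ m := by exact_mod_cast hm1
  have hmx : (m : ℝ) ≤ x := Nat.floor_le (by linarith)
  have hxm : x < m + 1 := Nat.lt_floor_add_one x
  have hGamma_lower : log m ! ≤ log (Gamma (x + 1)) := by
    rw [← Gamma_nat_eq_factorial]
    exact log_le_log (Gamma_pos_of_pos (by linarith))
      (Gamma_strictMonoOn_Ici.monotoneOn (by simp; linarith) (by simp; linarith) (by linarith))
  have hGamma_upper : log (Gamma (x + 1)) ≤ log (m + 1)! := by
    rw [← Gamma_nat_eq_factorial]
    exact log_le_log (Gamma_pos_of_pos (by linarith))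
      (Gamma_strictMonoOn_Ici.monotoneOn (by simp; linarith) (by simp; linarith)
        (by push_cast; linarith))
  have hm_lower : m * log m - m ≤ log m ! := by
    have := Stirling.le_log_factorial_stirling (n := m) (by omega)
    have : 0 ≤ log m := log_nonneg hm
    have : 0 ≤ log (2 * π) := log_nonneg (by linarith [pi_gt_three])
    linarith
  have hm_upper := log_factorial_le_stirling (n := m + 1) (Nat.succ_ne_zero m)
  push_cast at hm_upper
  have hx_sub := mul_log_sub_self_sub_le (s := m) (t := x) (by linarith) (by linarith)
  have hm_sub := mul_log_sub_self_sub_le (s := x) (t := m + 1) (by linarith) (by linarith)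
  have hlog_x : 0 ≤ log x := log_nonneg hx
  have hlog_m : log (m + 1) ≤ 1 + log x :=
    calc log (m + 1) ≤ log (2 * x) := log_le_log (by linarith) (by linarith)
      _ = log 2 + log x := log_mul two_ne_zero (by linarith)
      _ ≤ 1 + log x := by linarith [log_two_lt_d9]
  have h1 : (x - m) * log x ≤ log x := mul_le_of_le_one_left hlog_x (by linarith)
  have h2 : (m + 1 - x) * log (m + 1) ≤ log (m + 1) :=
    mul_le_of_le_one_left (log_nonneg (by linarith)) (by linarith)
  rw [abs_le]
  constructor <;> linarith

lemma isLittleO_log_Gamma_add_one :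
    (fun x => log (Gamma (x + 1)) - (x * log x - x)) =o[atTop] id := by
  have hbound : (fun x => log (Gamma (x + 1)) - (x * log x - x)) =O[atTop]
      (fun x => 3 + 2 * log x) := by
    refine IsBigO.of_bound 1 ?_
    filter_upwards [eventually_ge_atTop 1] with x hx
    rw [one_mul, norm_eq_abs, norm_of_nonneg (by linarith [log_nonneg hx])]
    exact abs_log_Gamma_add_one_sub_le hx
  exact hbound.trans_isLittleO
    ((isLittleO_const_id_atTop 3).add (isLittleO_log_id_atTop.const_mul_left 2))

lemma tendsto_log_Gamma_div_add_one_sub {a : ℝ} (ha : 0 < a) :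
    Tendsto (fun n : ℕ => (log (Gamma (n / a + 1)) - (n / a * log (n / a) - n / a)) / n)
      atTop (nhds 0) := by
  have hdiv : Tendsto (fun n : ℕ => (n : ℝ) / a) atTop atTop :=
    tendsto_natCast_atTop_atTop.atTop_div_const ha
  have hbigO : (fun n : ℕ => (n : ℝ) / a) =O[atTop] (fun n : ℕ => (n : ℝ)) := by
    simpa only [div_eq_inv_mul] using isBigO_const_mul_self a⁻¹ (fun n : ℕ => (n : ℝ)) atTop
  exact ((isLittleO_log_Gamma_add_one.comp_tendsto hdiv).trans_isBigO hbigO).tendsto_div_nhds_zero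

lemma tendsto_log_one_sub_div (c : ℝ) :
    Tendsto (fun n : ℕ => log (1 - c / n)) atTop (nhds 0) := by
  simpa using ((tendsto_const_div_atTop_nhds_zero_nat c).const_sub 1).log (by norm_num)

lemma log_S {n : ℕ} {p : ℝ} (hp : 1 < p) (hpn : p < n) :
    log (S n p) = log p - log (n - p) + log (1 - 1 / n) - log p / p - log (2 * π) / 2
      + (1 / (p / (p - 1)) - 1 / 2) * (1 - log n) + (log (Gamma n) - log (Gamma (n / p))) / n := by
  have hp0 : 0 < p := by linarith
  have hn : (0 : ℝ) < n := by linarith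
  have hnp : 0 < (n : ℝ) - p := by linarith
  have hn1 : 0 < 1 - 1 / (n : ℝ) := by rw [sub_pos, div_lt_one hn]; linarith
  have hΓn : 0 < Gamma n := Gamma_pos_of_pos hn
  have hΓnp : 0 < Gamma (n / p) := Gamma_pos_of_pos (by positivity)
  rw [S, log_mul (by positivity) (by positivity), log_mul (by positivity) (by positivity),
    log_mul (by positivity) (by positivity), log_mul (by positivity) (by positivity),
    log_mul (by positivity) (by positivity), log_rpow hp0, log_rpow (by positivity),
    log_rpow (by positivity), log_rpow (by positivity), log_div (exp_ne_zero 1) hn.ne', log_exp,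
    log_div hΓn.ne' hΓnp.ne', mul_div_right_comm, mul_div_cancel_right₀ _ hn.ne',
    log_div hp0.ne' hnp.ne']
  ring

lemma log_AT {n : ℕ} {p : ℝ} (hp : 1 < p) (hpn : p < n) :
    log (AT n p) = -log π / 2 - log n / p + 1 / (p / (p - 1)) * (log (p - 1) - log (n - p))
      + (log (Gamma (n / 2 + 1)) + log (Gamma n) - log (Gamma (n / p))
        - log (Gamma (n / (p / (p - 1)) + 1))) / n := by
  have hp0 : 0 < p := by linarith
  have hp1 : 0 < p - 1 := by linarith
  have hn : (0 : ℝ) < n := by linarith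
  have hnp : 0 < (n : ℝ) - p := by linarith
  have hΓ1 : 0 < Gamma (n / 2 + 1) := Gamma_pos_of_pos (by positivity)
  have hΓn : 0 < Gamma n := Gamma_pos_of_pos hn
  have hΓnp : 0 < Gamma (n / p) := Gamma_pos_of_pos (by positivity)
  have hΓ2 : 0 < Gamma (n / (p / (p - 1)) + 1) := Gamma_pos_of_pos (by positivity)
  rw [AT, log_mul (by positivity) (by positivity), log_mul (by positivity) (by positivity),
    log_mul (by positivity) (by positivity), log_rpow pi_pos, log_rpow hn,
    log_rpow (by positivity), log_rpow (by positivity), log_div hp1.ne' hnp.ne',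
    log_div (by positivity) (by positivity), log_mul hΓ1.ne' hΓn.ne', log_mul hΓnp.ne' hΓ2.ne']
  ring

lemma S_pos {n : ℕ} {p : ℝ} (hp : 1 < p) (hpn : p < n) : 0 < S n p := by
  have hn : (0 : ℝ) < n := by linarith
  have hnp : 0 < (n : ℝ) - p := by linarith
  have hn1 : 0 < 1 - 1 / (n : ℝ) := by rw [sub_pos, div_lt_one hn]; linarith
  have hΓn : 0 < Gamma n := Gamma_pos_of_pos hn
  have hΓnp : 0 < Gamma (n / p) := Gamma_pos_of_pos (by positivity)
  unfold S
  positivity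

lemma AT_pos {n : ℕ} {p : ℝ} (hp : 1 < p) (hpn : p < n) : 0 < AT n p := by
  have hp1 : 0 < p - 1 := by linarith
  have hn : (0 : ℝ) < n := by linarith
  have hnp : 0 < (n : ℝ) - p := by linarith
  have hΓ1 : 0 < Gamma (n / 2 + 1) := Gamma_pos_of_pos (by positivity)
  have hΓn : 0 < Gamma n := Gamma_pos_of_pos hn
  have hΓnp : 0 < Gamma (n / p) := Gamma_pos_of_pos (by positivity)
  have hΓ2 : 0 < Gamma (n / (p / (p - 1)) + 1) := Gamma_pos_of_pos (by positivity)
  unfold AT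
  positivity

lemma log_S_div_AT {n : ℕ} {p : ℝ} (hp : 1 < p) (hpn : p < n) :
    log (S n p / AT n p) =
      (log (Gamma (n / (p / (p - 1)) + 1))
          - (n / (p / (p - 1)) * log (n / (p / (p - 1))) - n / (p / (p - 1)))) / n
        - (log (Gamma (n / 2 + 1)) - (n / 2 * log (n / 2) - n / 2)) / n
        - 1 / p * log (1 - p / n) + log (1 - 1 / n) := by
  have hp0 : 0 < p := by linarith
  have hp1 : 0 < p - 1 := by linarith
  have hn : (0 : ℝ) < n := by linarith
  have hnp : 0 < (n : ℝ) - p := by linarith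
  have hlog_div : log (n / (p / (p - 1))) = log n + log (p - 1) - log p := by
    rw [log_div hn.ne' (by positivity), log_div hp0.ne' hp1.ne']
    ring
  rw [log_div (S_pos hp hpn).ne' (AT_pos hp hpn).ne', log_S hp hpn, log_AT hp hpn, hlog_div,
    log_div hn.ne' two_ne_zero, log_mul two_ne_zero pi_ne_zero,
    one_sub_div (a := p) hn.ne', log_div hnp.ne' hn.ne']
  field_simp
  ring

theorem stmt_10 (p : ℝ) (hp : 2 ≤ p) :
    Filter.Tendsto (fun n : ℕ => S n p / AT n p) Filter.atTop (nhds 1) := by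
  have hp1 : 1 < p := by linarith
  have hlarge : ∀ᶠ n : ℕ in atTop, p < n := tendsto_natCast_atTop_atTop.eventually_gt_atTop p
  have hlog : Tendsto (fun n : ℕ => log (S n p / AT n p)) atTop (nhds 0) := by
    have h := (((tendsto_log_Gamma_div_add_one_sub (a := p / (p - 1)) (by positivity)).sub
      (tendsto_log_Gamma_div_add_one_sub two_pos)).sub
      ((tendsto_log_one_sub_div p).const_mul (1 / p))).add (tendsto_log_one_sub_div 1)
    rw [sub_zero, mul_zero, sub_zero, zero_add] at h
    exact h.congr' (hlarge.mono fun n hpn => (log_S_div_AT hp1 hpn).symm)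
  rw [← exp_zero]
  refine ((continuous_exp.tendsto 0).comp hlog).congr' (hlarge.mono fun n hpn => ?_)
  exact exp_log (div_pos (S_pos hp1 hpn) (AT_pos hp1 hpn))
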